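/- arXiv:2410.11521 — 3 statements merged into one kernel-verified Lean document; each statement's English description precedes it below -/
import Mathlib

section
/- Assume E_max ≥ 1, Δ_max ≥ 1, 0 < p < 1, 0 < q < 1, 0 < β < 1, and 0 < p_s ≤ 1. Consider the stationary stochastic policy that in every state selects each action a ∈ {0,1} with probability 1/2, inducing the Markov transition matrix M(s,s') = (K_0(s,s') + K_1(s,s'))/2 on the finite state space 𝔖. Then for every pair of states s, s' ∈ 𝔖 there exists an integer n ≥ 1 such that (M^n)(s,s') > 0; in particular, the whole state space forms a single communicating class under this policy, so the MDP is weakly accessible (Proposition 1). -/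
open Finset

namespace VIA

/-- The MDP state space: battery level, source state, VIA value. -/
abbrev State (Emax Dmax : ℕ) := Fin (Emax + 1) × Bool × Fin (Dmax + 1)

/-- Deterministic next state given the action `a`, energy arrival `b`,
source-flip indicator `f`, and channel-success indicator `h`. -/
def nextState (Emax Dmax : ℕ) (s : State Emax Dmax) (a b f h : Bool) :
    State Emax Dmax :=
  let act : Bool := a && decide (0 < s.1.val)
  -- a successful transmission requires transmitting and channel success
  let succ : Bool := act && h
  (⟨min (s.1.val + (if b then 1 else 0) - (if act then 1 else 0)) Emax,
      Nat.lt_succ_of_le (min_le_right _ _)⟩,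
   (if f then !s.2.1 else s.2.1),
   ⟨min (if succ then (if f then 1 else 0)
         else (if f then s.2.2.val + 1 else s.2.2.val)) Dmax,
      Nat.lt_succ_of_le (min_le_right _ _)⟩)

/-- Bernoulli weight: probability `x` for `true`, `1 - x` for `false`. -/
def bern (x : ℝ) : Bool → ℝ := fun b => if b then x else 1 - x

/-- The transition kernel `K_a(s, s')` of the MDP, for action `a`
(`a = true` means transmit).  The source flips with probability `p`
from state `0 = false` and with probability `q` from state `1 = true`;
energy arrives with probability `β`; a transmission succeeds with
probability `ps`. -/
def K (Emax Dmax : ℕ) (p q β ps : ℝ) (a : Bool) (s s' : State Emax Dmax) : ℝ :=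
  ∑ b : Bool, ∑ f : Bool, ∑ h : Bool,
    bern β b * bern (if s.2.1 then q else p) f * bern ps h *
      (if nextState Emax Dmax s a b f h = s' then 1 else 0)

/-- The per-stage cost: the VIA value. -/
def cost (Emax Dmax : ℕ) (s : State Emax Dmax) : ℝ := s.2.2.val

/-- `(K_a V)(s) = ∑_{s'} K_a(s,s') V(s')`. -/
def KV (Emax Dmax : ℕ) (p q β ps : ℝ) (a : Bool) (V : State Emax Dmax → ℝ)
    (s : State Emax Dmax) : ℝ :=
  ∑ s' : State Emax Dmax, K Emax Dmax p q β ps a s s' * V s'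

/-- Value iteration: `V_0 ≡ 0`,
`V_{t+1}(s) = c(s) + min{(K_0 V_t)(s), (K_1 V_t)(s)}`. -/
def Viter (Emax Dmax : ℕ) (p q β ps : ℝ) : ℕ → State Emax Dmax → ℝ
  | 0 => fun _ => 0
  | t + 1 => fun s =>
      cost Emax Dmax s +
        min (KV Emax Dmax p q β ps false (Viter Emax Dmax p q β ps t) s)
            (KV Emax Dmax p q β ps true (Viter Emax Dmax p q β ps t) s)

/-- `ΔV_t(s) = (K_1 V_t)(s) − (K_0 V_t)(s)`. -/
def dV (Emax Dmax : ℕ) (p q β ps : ℝ) (t : ℕ) (s : State Emax Dmax) : ℝ :=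
  KV Emax Dmax p q β ps true (Viter Emax Dmax p q β ps t) s -
    KV Emax Dmax p q β ps false (Viter Emax Dmax p q β ps t) s



section Aux

variable {Emax Dmax : ℕ}

/-- Reachability in `n ≥ 1` steps with positive probability. -/
def Reach (M : Matrix (State Emax Dmax) (State Emax Dmax) ℝ)
    (t u : State Emax Dmax) : Prop :=
  ∃ n : ℕ, 1 ≤ n ∧ 0 < (M ^ n) t u

end Aux


/-- **Proposition 1 (weak accessibility).**  Under the stationary policy that
picks each action with probability 1/2, inducing the transition matrix
`M = (K_0 + K_1)/2`, every state is reachable from every other state: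
for all `s, s'` there is `n ≥ 1` with `(M^n)(s,s') > 0`.  Hence the whole
state space is a single communicating class and the MDP is weakly
accessible. -/
theorem weakly_accessible (Emax Dmax : ℕ) (hE : 1 ≤ Emax) (hD : 1 ≤ Dmax)
    (p q β ps : ℝ) (hp0 : 0 < p) (hp1 : p < 1) (hq0 : 0 < q) (hq1 : q < 1)
    (hβ0 : 0 < β) (hβ1 : β < 1) (hps0 : 0 < ps) (hps1 : ps ≤ 1)
    (M : Matrix (State Emax Dmax) (State Emax Dmax) ℝ)
    (hM : ∀ s s' : State Emax Dmax,
      M s s' = (K Emax Dmax p q β ps false s s' + K Emax Dmax p q β ps true s s') / 2) :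
    ∀ s s' : State Emax Dmax, ∃ n : ℕ, 1 ≤ n ∧ 0 < (M ^ n) s s' := by
  -- basic positivity facts about `bern`
  have hbnn : ∀ (x : ℝ), 0 ≤ x → x ≤ 1 → ∀ c : Bool, 0 ≤ bern x c := by
    intro x h0 h1 c; cases c <;> simp [bern] <;> linarith
  have hbpos : ∀ (x : ℝ), 0 < x → x < 1 → ∀ c : Bool, 0 < bern x c := by
    intro x h0 h1 c; cases c <;> simp [bern] <;> linarith
  have hflip0 : ∀ t : State Emax Dmax, 0 < (if t.2.1 then q else p) := by
    intro t; split <;> assumption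
  have hflip1 : ∀ t : State Emax Dmax, (if t.2.1 then q else p) < 1 := by
    intro t; split <;> assumption
  -- nonnegativity of each term of `K`
  have hterm : ∀ (a : Bool) (t u : State Emax Dmax) (b f h : Bool),
      0 ≤ bern β b * bern (if t.2.1 then q else p) f * bern ps h *
        (if nextState Emax Dmax t a b f h = u then (1:ℝ) else 0) := by
    intro a t u b f h
    have h1 := hbnn β hβ0.le hβ1.le b
    have h2 := hbnn _ (hflip0 t).le (hflip1 t).le f
    have h3 := hbnn ps hps0.le hps1 h
    have h4 : (0:ℝ) ≤ (if nextState Emax Dmax t a b f h = u then (1:ℝ) else 0) := by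
      split <;> norm_num
    exact mul_nonneg (mul_nonneg (mul_nonneg h1 h2) h3) h4
  have hKnn : ∀ (a : Bool) (t u : State Emax Dmax), 0 ≤ K Emax Dmax p q β ps a t u := by
    intro a t u
    exact Finset.sum_nonneg fun b _ => Finset.sum_nonneg fun f _ =>
      Finset.sum_nonneg fun h _ => hterm a t u b f h
  -- positivity of `K` at a realizable next state (with channel success)
  have hKpos : ∀ (a b f : Bool) (t : State Emax Dmax),
      0 < K Emax Dmax p q β ps a t (nextState Emax Dmax t a b f true) := by
    intro a b f t
    unfold K
    refine Finset.sum_pos' (fun b' _ => Finset.sum_nonneg fun f' _ =>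
      Finset.sum_nonneg fun h' _ => hterm a t _ b' f' h') ⟨b, Finset.mem_univ b, ?_⟩
    refine Finset.sum_pos' (fun f' _ => Finset.sum_nonneg fun h' _ =>
      hterm a t _ b f' h') ⟨f, Finset.mem_univ f, ?_⟩
    refine Finset.sum_pos' (fun h' _ => hterm a t _ b f h') ⟨true, Finset.mem_univ true, ?_⟩
    rw [if_pos rfl, mul_one]
    have h1 := hbpos β hβ0 hβ1 b
    have h2 := hbpos _ (hflip0 t) (hflip1 t) f
    have h3 : 0 < bern ps true := by simpa [bern] using hps0
    exact mul_pos (mul_pos h1 h2) h3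
  -- `M` entries nonneg, and positive at one-step reachable states
  have hMnn : ∀ t u : State Emax Dmax, 0 ≤ M t u := by
    intro t u
    rw [hM]
    have := hKnn false t u
    have := hKnn true t u
    linarith
  have hMpos : ∀ (t : State Emax Dmax) (a b f : Bool),
      0 < M t (nextState Emax Dmax t a b f true) := by
    intro t a b f
    rw [hM]
    have h0 := hKnn false t (nextState Emax Dmax t a b f true)
    have h1 := hKnn true t (nextState Emax Dmax t a b f true)
    have h2 := hKpos a b f t
    cases a <;> linarith
  have hMpownn : ∀ (n : ℕ) (t u : State Emax Dmax), 0 ≤ (M ^ n) t u := by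
    intro n
    induction n with
    | zero =>
      intro t u
      rw [pow_zero, Matrix.one_apply]
      split <;> norm_num
    | succ n ih =>
      intro t u
      rw [pow_succ, Matrix.mul_apply]
      exact Finset.sum_nonneg fun w _ => mul_nonneg (ih t w) (hMnn w u)
  -- one-step reachability and transitivity
  have hone : ∀ (t : State Emax Dmax) (a b f : Bool),
      Reach M t (nextState Emax Dmax t a b f true) := by
    intro t a b f
    exact ⟨1, le_refl 1, by rw [pow_one]; exact hMpos t a b f⟩
  have htrans : ∀ t u v : State Emax Dmax, Reach M t u → Reach M u v → Reach M t v := by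
    rintro t u v ⟨m, hm, hmu⟩ ⟨n, hn, hnv⟩
    refine ⟨m + n, by omega, ?_⟩
    rw [pow_add, Matrix.mul_apply]
    exact Finset.sum_pos' (fun w _ => mul_nonneg (hMpownn m t w) (hMpownn n w v))
      ⟨u, Finset.mem_univ u, mul_pos hmu hnv⟩
  have hcomp : ∀ t u v : State Emax Dmax, Reach M t u → (u = v ∨ Reach M u v) → Reach M t v := by
    rintro t u v h (rfl | h2)
    · exact h
    · exact htrans t u v h h2
  -- explicit computations of `nextState` for the moves we use
  have move1 : ∀ (t : State Emax Dmax) (f : Bool),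
      (nextState Emax Dmax t false true f true).1.val = min (t.1.val + 1) Emax ∧
      (nextState Emax Dmax t false true f true).2.1 = (if f then !t.2.1 else t.2.1) ∧
      (nextState Emax Dmax t false true f true).2.2.val
        = min (if f then t.2.2.val + 1 else t.2.2.val) Dmax := by
    intro t f; refine ⟨?_, ?_, ?_⟩ <;> simp [nextState]
  have moveT : ∀ (t : State Emax Dmax) (b : Bool), 0 < t.1.val →
      (nextState Emax Dmax t true b false true).1.val
        = min (t.1.val + (if b then 1 else 0) - 1) Emax ∧
      (nextState Emax Dmax t true b false true).2.1 = t.2.1 ∧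
      (nextState Emax Dmax t true b false true).2.2.val = 0 := by
    intro t b ht; refine ⟨?_, ?_, ?_⟩ <;> simp [nextState, ht]
  have moveB : ∀ (t : State Emax Dmax),
      (nextState Emax Dmax t false false true true).1.val = t.1.val ∧
      (nextState Emax Dmax t false false true true).2.1 = !t.2.1 ∧
      (nextState Emax Dmax t false false true true).2.2.val = min (t.2.2.val + 1) Dmax := by
    intro t
    have h := t.1.isLt
    refine ⟨?_, ?_, ?_⟩ <;> simp [nextState] <;> omega
  -- pumping the battery up
  have pump : ∀ (k : ℕ) (t : State Emax Dmax),
      ∃ u : State Emax Dmax, (t = u ∨ Reach M t u) ∧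
        u.1.val = min (t.1.val + k) Emax ∧ u.2.1 = t.2.1 ∧ u.2.2.val = t.2.2.val := by
    intro k
    induction k with
    | zero =>
      intro t
      have := t.1.isLt
      exact ⟨t, Or.inl rfl, by omega, rfl, rfl⟩
    | succ k ih =>
      intro t
      obtain ⟨u, hu, h1, h2, h3⟩ := ih (nextState Emax Dmax t false true false true)
      obtain ⟨m1, m2, m3⟩ := move1 t false
      have hd := t.2.2.isLt
      refine ⟨u, Or.inr ?_, ?_, ?_, ?_⟩
      · exact hcomp t _ u (hone t false true false) hu
      · rw [h1, m1]; omega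
      · rw [h2, m2]; simp
      · rw [h3, m3]; simp; omega
  -- draining the battery (keeping VIA at 0)
  have descend : ∀ (k : ℕ) (t : State Emax Dmax), t.2.2.val = 0 → k ≤ t.1.val →
      ∃ u : State Emax Dmax, (t = u ∨ Reach M t u) ∧
        u.1.val = t.1.val - k ∧ u.2.1 = t.2.1 ∧ u.2.2.val = 0 := by
    intro k
    induction k with
    | zero =>
      intro t ht _
      exact ⟨t, Or.inl rfl, by omega, rfl, ht⟩
    | succ k ih =>
      intro t ht hk
      have hpos : 0 < t.1.val := by omega
      obtain ⟨m1, m2, m3⟩ := moveT t false hpos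
      have he := t.1.isLt
      obtain ⟨u, hu, h1, h2, h3⟩ := ih (nextState Emax Dmax t true false false true)
        m3 (by rw [m1]; simp; omega)
      refine ⟨u, Or.inr ?_, ?_, ?_, ?_⟩
      · exact hcomp t _ u (hone t true false false) hu
      · rw [h1, m1]; simp; omega
      · rw [h2, m2]
      · exact h3
  -- bumping the VIA up (flipping the source each step, battery unchanged)
  have bump : ∀ (k : ℕ) (t : State Emax Dmax),
      ∃ u : State Emax Dmax, (t = u ∨ Reach M t u) ∧
        u.1.val = t.1.val ∧
        u.2.1 = (if k % 2 = 1 then !t.2.1 else t.2.1) ∧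
        u.2.2.val = min (t.2.2.val + k) Dmax := by
    intro k
    induction k with
    | zero =>
      intro t
      have := t.2.2.isLt
      exact ⟨t, Or.inl rfl, rfl, by simp, by omega⟩
    | succ k ih =>
      intro t
      obtain ⟨u, hu, h1, h2, h3⟩ := ih (nextState Emax Dmax t false false true true)
      obtain ⟨m1, m2, m3⟩ := moveB t
      refine ⟨u, Or.inr ?_, ?_, ?_, ?_⟩
      · exact hcomp t _ u (hone t false false true) hu
      · rw [h1, m1]
      · rw [h2, m2]
        rcases Nat.even_or_odd k with hk | hk
        · have e1 : k % 2 = 0 := Nat.even_iff.mp hk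
          have e2 : (k + 1) % 2 = 1 := by omega
          simp [e1, e2]
        · have e1 : k % 2 = 1 := Nat.odd_iff.mp hk
          have e2 : (k + 1) % 2 = 0 := by omega
          simp [e1, e2]
      · rw [h3, m3]; omega
  -- main argument
  intro s s'
  -- the source value needed before bumping the VIA up to `s'.2.2`
  set x2 : Bool := if s'.2.2.val % 2 = 1 then !s'.2.1 else s'.2.1 with hx2
  -- step 1: harvest energy, set the source to `x2`
  set t1 : State Emax Dmax :=
    nextState Emax Dmax s false true (s.2.1 != x2) true with ht1
  obtain ⟨m11, m12, m13⟩ := move1 s (s.2.1 != x2)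
  have ht1x : t1.2.1 = x2 := by
    rw [ht1, m12]; cases hs : s.2.1 <;> cases hx : x2 <;> simp [hs, hx]
  have ht1e : 1 ≤ t1.1.val := by rw [ht1, m11]; omega
  have hR1 : Reach M s t1 := hone s false true (s.2.1 != x2)
  -- phase 2: pump the battery to full
  obtain ⟨t2, hu2, h21, h22, h23⟩ := pump Emax t1
  have ht2e : t2.1.val = Emax := by omega
  have ht2x : t2.2.1 = x2 := by rw [h22, ht1x]
  have hR2 : Reach M s t2 := hcomp s t1 t2 hR1 hu2
  -- step 3: a successful transmission with no source change resets VIA to 0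
  obtain ⟨m31, m32, m33⟩ := moveT t2 true (by omega)
  set t3 : State Emax Dmax := nextState Emax Dmax t2 true true false true with ht3
  have ht3e : t3.1.val = Emax := by rw [ht3, m31]; simp; omega
  have ht3x : t3.2.1 = x2 := by rw [ht3, m32, ht2x]
  have ht3d : t3.2.2.val = 0 := by rw [ht3, m33]
  have hR3 : Reach M s t3 := htrans s t2 t3 hR2 (hone t2 true true false)
  -- phase 4: drain the battery down to `s'.1`
  have he' := s'.1.isLt
  obtain ⟨t4, hu4, h41, h42, h43⟩ := descend (Emax - s'.1.val) t3 ht3d (by omega)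
  have ht4e : t4.1.val = s'.1.val := by omega
  have ht4x : t4.2.1 = x2 := by rw [h42, ht3x]
  have hR4 : Reach M s t4 := hcomp s t3 t4 hR3 hu4
  -- phase 5: bump the VIA up to `s'.2.2`
  have hd' := s'.2.2.isLt
  obtain ⟨t5, hu5, h51, h52, h53⟩ := bump s'.2.2.val t4
  have hR5 : Reach M s t5 := hcomp s t4 t5 hR4 hu5
  have ht5 : t5 = s' := by
    have hfst : t5.1 = s'.1 := Fin.ext (by omega)
    have hx : t5.2.1 = s'.2.1 := by
      rw [h52, ht4x, hx2]
      rcases Nat.eq_zero_or_pos (s'.2.2.val % 2) with hpar | hpar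
      · simp [hpar]
      · have : s'.2.2.val % 2 = 1 := by omega
        simp [this]
    have hsnd : t5.2.2 = s'.2.2 := Fin.ext (by rw [h53, h43]; omega)
    exact Prod.ext hfst (Prod.ext hx hsnd)
  rw [← ht5]
  exact hR5

end VIA
end

section
/- Assume E_max ≥ 1, Δ_max ≥ 1, 0 < p < 1, 0 < q < 1, 0 < β < 1, and 0 < p_s ≤ 1. Then there exist θ ∈ ℝ and V : 𝔖 → ℝ solving the average-cost Bellman equation θ + V(S) = c(S) + min{(K_0 V)(S), (K_1 V)(S)} for all S ∈ 𝔖, where (K_a V)(S) = ∑_{S'∈𝔖} K_a(S,S') V(S') (existence part of Proposition 2). -/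
/-!
Vanishing discount. For `α < 1` the discounted Bellman operator is an `α`-contraction in the sup
norm, so it has a fixed point `V_α`, and `(1 - α) V_α` lies between the extreme costs. Every state
reaches every other along transitions of positive probability: charge the battery fully, reset the
VIA while choosing the source state, drain to the target level, then let the source flip up to the
target VIA. Since the costs are bounded, this bounds the span of `V_α` uniformly in `α`. Hence
`((1 - α) V_α(s₀), V_α - V_α(s₀))` stays in a compact box, and a limit point as `α → 1` solves the
average-cost equation.
-/

open Finset

namespace VIA

open Filter Topology Relation

section FiniteMDP

variable {S : Type*} [Fintype S]

structure IsStochastic (P : Bool → S → S → ℝ) : Prop where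
  nonneg : ∀ a s s', 0 ≤ P a s s'
  sum_eq_one : ∀ a s, ∑ s', P a s s' = 1

def expect (P : Bool → S → S → ℝ) (a : Bool) (V : S → ℝ) (s : S) : ℝ :=
  ∑ s', P a s s' * V s'

def bellman (P : Bool → S → S → ℝ) (c : S → ℝ) (α : ℝ) (V : S → ℝ) (s : S) : ℝ :=
  c s + α * min (expect P false V s) (expect P true V s)

def PosStep (P : Bool → S → S → ℝ) (s s' : S) : Prop := ∃ a, 0 < P a s s'

lemma continuous_expect (P : Bool → S → S → ℝ) (a : Bool) (s : S) :
    Continuous fun V => expect P a V s :=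
  continuous_finsetSum _ fun x _ => continuous_const.mul (continuous_apply x)

lemma continuous_bellman (P : Bool → S → S → ℝ) (c : S → ℝ) (s : S) :
    Continuous fun x : ℝ × (S → ℝ) => bellman P c x.1 x.2 s :=
  continuous_const.add <| continuous_fst.mul <|
    ((continuous_expect P false s).comp continuous_snd).min
      ((continuous_expect P true s).comp continuous_snd)

lemma min_expect_le (P : Bool → S → S → ℝ) (a : Bool) (W : S → ℝ) (s : S) :
    min (expect P false W s) (expect P true W s) ≤ expect P a W s := by
  cases a
  exacts [min_le_left _ _, min_le_right _ _]

namespace IsStochastic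

variable {P : Bool → S → S → ℝ} (hP : IsStochastic P)
include hP

lemma expect_le {V : S → ℝ} {M : ℝ} (hV : ∀ x, V x ≤ M) (a : Bool) (s : S) :
    expect P a V s ≤ M :=
  calc expect P a V s ≤ ∑ x, P a s x * M :=
        sum_le_sum fun x _ => mul_le_mul_of_nonneg_left (hV x) (hP.nonneg a s x)
    _ = M := by rw [← sum_mul, hP.sum_eq_one, one_mul]

lemma le_expect {V : S → ℝ} {m : ℝ} (hV : ∀ x, m ≤ V x) (a : Bool) (s : S) :
    m ≤ expect P a V s :=
  calc m = ∑ x, P a s x * m := by rw [← sum_mul, hP.sum_eq_one, one_mul]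
    _ ≤ expect P a V s :=
        sum_le_sum fun x _ => mul_le_mul_of_nonneg_left (hV x) (hP.nonneg a s x)

lemma expect_add_const (V : S → ℝ) (k : ℝ) (a : Bool) (s : S) :
    expect P a (fun x => V x + k) s = expect P a V s + k := by
  simp only [expect, mul_add, sum_add_distrib, ← sum_mul, hP.sum_eq_one, one_mul]

omit hP in
lemma expect_sub (U V : S → ℝ) (a : Bool) (s : S) :
    expect P a (fun x => U x - V x) s = expect P a U s - expect P a V s := by
  simp only [expect, mul_sub, sum_sub_distrib]

lemma abs_expect_sub_le {U V : S → ℝ} {d : ℝ} (h : ∀ x, |U x - V x| ≤ d) (a : Bool) (s : S) :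
    |expect P a U s - expect P a V s| ≤ d := by
  rw [← expect_sub, abs_le]
  exact ⟨hP.le_expect (fun x => (abs_le.1 (h x)).1) a s,
    hP.expect_le (fun x => (abs_le.1 (h x)).2) a s⟩

lemma expect_le_of_le {V : S → ℝ} {M : ℝ} (hV : ∀ x, V x ≤ M) (a : Bool) (s s' : S) :
    expect P a V s ≤ P a s s' * V s' + (1 - P a s s') * M := by
  classical
  have hrest : ∑ x ∈ univ.erase s', P a s x = 1 - P a s s' := by
    rw [← hP.sum_eq_one a s, ← add_sum_erase _ _ (mem_univ s'), add_sub_cancel_left]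
  rw [expect, ← add_sum_erase _ _ (mem_univ s'), ← hrest, sum_mul]
  gcongr with x
  · exact hP.nonneg a s x
  · exact hV x

lemma exists_bellman_fixedPoint (c : S → ℝ) {α : ℝ} (hα0 : 0 ≤ α) (hα1 : α < 1) :
    ∃ V, bellman P c α V = V := by
  have hlip : LipschitzWith (Real.toNNReal α) (bellman P c α) := by
    refine LipschitzWith.of_dist_le_mul fun U V => ?_
    rw [Real.coe_toNNReal α hα0, dist_pi_le_iff (by positivity)]
    intro s
    have hd (x : S) : |U x - V x| ≤ dist U V := by
      rw [← Real.dist_eq]; exact dist_le_pi_dist U V x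
    rw [Real.dist_eq, bellman, bellman, add_sub_add_left_eq_sub, ← mul_sub, abs_mul,
      abs_of_nonneg hα0]
    gcongr
    exact (abs_min_sub_min_le_max _ _ _ _).trans
      (max_le (hP.abs_expect_sub_le hd false s) (hP.abs_expect_sub_le hd true s))
  have hcontr : ContractingWith (Real.toNNReal α) (bellman P c α) :=
    ⟨by simpa [Real.toNNReal_lt_one] using hα1, hlip⟩
  exact ⟨_, hcontr.fixedPoint_isFixedPt⟩

variable {c : S → ℝ} {lo hi α : ℝ} {V : S → ℝ}

lemma le_one_sub_mul_of_bellman_eq (hlo : ∀ s, lo ≤ c s) (hα0 : 0 ≤ α) (hα1 : α ≤ 1)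
    (hV : bellman P c α V = V) (s : S) : lo ≤ (1 - α) * V s := by
  have : Nonempty S := ⟨s⟩
  obtain ⟨s₀, hs₀⟩ := Finite.exists_min V
  have hmin : V s₀ ≤ min (expect P false V s₀) (expect P true V s₀) :=
    le_min (hP.le_expect hs₀ false s₀) (hP.le_expect hs₀ true s₀)
  have hfix := congrFun hV s₀
  rw [bellman] at hfix
  nlinarith [hlo s₀, mul_le_mul_of_nonneg_left hmin hα0,
    mul_le_mul_of_nonneg_left (hs₀ s) (sub_nonneg.2 hα1)]

lemma one_sub_mul_le_of_bellman_eq (hhi : ∀ s, c s ≤ hi) (hα0 : 0 ≤ α) (hα1 : α ≤ 1)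
    (hV : bellman P c α V = V) (s : S) : (1 - α) * V s ≤ hi := by
  have : Nonempty S := ⟨s⟩
  obtain ⟨s₁, hs₁⟩ := Finite.exists_max V
  have hmax := (min_expect_le P false V s₁).trans (hP.expect_le hs₁ false s₁)
  have hfix := congrFun hV s₁
  rw [bellman] at hfix
  nlinarith [hhi s₁, mul_le_mul_of_nonneg_left hmax hα0,
    mul_le_mul_of_nonneg_left (hs₁ s) (sub_nonneg.2 hα1)]

lemma le_add_expect_of_bellman_eq (hlo : ∀ s, lo ≤ c s) (hhi : ∀ s, c s ≤ hi) (hα0 : 0 ≤ α)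
    (hα1 : α ≤ 1) (hV : bellman P c α V = V) (a : Bool) (s : S) :
    V s ≤ hi - lo + expect P a V s := by
  have : Nonempty S := ⟨s⟩
  obtain ⟨s₀, hs₀⟩ := Finite.exists_min V
  have hmean : lo ≤ (1 - α) * expect P a V s :=
    (hP.le_one_sub_mul_of_bellman_eq hlo hα0 hα1 hV s₀).trans
      (mul_le_mul_of_nonneg_left (hP.le_expect hs₀ a s) (sub_nonneg.2 hα1))
  have hfix := congrFun hV s
  rw [bellman] at hfix
  nlinarith [hhi s, mul_le_mul_of_nonneg_left (min_expect_le P a V s) hα0]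

lemma exists_le_of_reflTransGen (C : ℝ) {s s' : S} (h : ReflTransGen (PosStep P) s s') :
    ∃ R w : ℝ, 0 < w ∧ ∀ W : S → ℝ, ∀ M : ℝ, (∀ a x, W x ≤ C + expect P a W x) →
      (∀ x, W x ≤ M) → W s ≤ R + w * W s' + (1 - w) * M := by
  induction h using ReflTransGen.head_induction_on with
  | refl => exact ⟨0, 1, one_pos, fun W M _ _ => by simp⟩
  | @head x y hstep _ ih =>
    obtain ⟨a, hv⟩ := hstep
    obtain ⟨R, w, hw, hR⟩ := ih
    refine ⟨C + P a x y * R, P a x y * w, mul_pos hv hw, fun W M hsub hM => ?_⟩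
    linear_combination hsub a x + hP.expect_le_of_le hM a x y + P a x y * hR W M hsub hM

lemma exists_span_bound (hcomm : ∀ s s', ReflTransGen (PosStep P) s s') (C : ℝ) :
    ∃ B, ∀ W : S → ℝ, (∀ a x, W x ≤ C + expect P a W x) → ∀ s s', W s - W s' ≤ B := by
  choose R w hw hR using fun s s' => hP.exists_le_of_reflTransGen C (hcomm s s')
  obtain ⟨B, hB⟩ := Finite.exists_le fun x : S × S => R x.1 x.2 / w x.1 x.2
  refine ⟨B, fun W hsub s s' => ?_⟩
  have : Nonempty S := ⟨s⟩
  obtain ⟨m, hm⟩ := Finite.exists_max W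
  have hspan : W m - W s' ≤ R m s' / w m s' := by
    rw [le_div_iff₀ (hw m s')]
    linarith [hR m s' W (W m) hsub hm]
  linarith [hm s, hB (m, s')]

lemma one_sub_mul_add_sub_eq_bellman (hV : bellman P c α V = V) (s₀ s : S) :
    (1 - α) * V s₀ + (V s - V s₀) = bellman P c α (fun x => V x - V s₀) s := by
  have hshift (a : Bool) : expect P a V s = expect P a (fun x => V x - V s₀) s + V s₀ := by
    rw [← hP.expect_add_const]
    simp only [sub_add_cancel]
  rw [← congrFun hV s, bellman, bellman, hshift, hshift, min_add_add_right]
  ring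

lemma exists_averageCost_solution [Nonempty S] (c : S → ℝ)
    (hcomm : ∀ s s', ReflTransGen (PosStep P) s s') :
    ∃ (θ : ℝ) (h : S → ℝ), ∀ s, θ + h s = c s + min (expect P false h s) (expect P true h s) := by
  obtain ⟨lo, hlo⟩ := Finite.exists_ge c
  obtain ⟨hi, hhi⟩ := Finite.exists_le c
  obtain ⟨B, hB⟩ := hP.exists_span_bound hcomm (hi - lo)
  set α : ℕ → ℝ := fun n => n / (n + 1)
  have hα0 (n : ℕ) : 0 ≤ α n := by positivity
  have hα1 (n : ℕ) : α n < 1 := (div_lt_one (by positivity)).2 (by linarith)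
  choose V hV using fun n => hP.exists_bellman_fixedPoint c (hα0 n) (hα1 n)
  obtain ⟨s₀⟩ := ‹Nonempty S›
  set g : ℕ → ℝ × (S → ℝ) := fun n => ((1 - α n) * V n s₀, fun x => V n x - V n s₀)
  have hg (n : ℕ) : g n ∈ Set.Icc (lo, fun _ => -B) (hi, fun _ => B) := by
    have hsub := hP.le_add_expect_of_bellman_eq hlo hhi (hα0 n) (hα1 n).le (hV n)
    refine ⟨⟨hP.le_one_sub_mul_of_bellman_eq hlo (hα0 n) (hα1 n).le (hV n) s₀,
      fun x => ?_⟩, ⟨hP.one_sub_mul_le_of_bellman_eq hhi (hα0 n) (hα1 n).le (hV n) s₀,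
      fun x => hB _ hsub x s₀⟩⟩
    linarith [hB _ hsub s₀ x]
  obtain ⟨⟨θ, h⟩, -, φ, hφ, hlim⟩ := isCompact_Icc.tendsto_subseq hg
  have hαlim : Tendsto α atTop (𝓝 1) := tendsto_natCast_div_add_atTop 1
  refine ⟨θ, h, fun s => ?_⟩
  have hsol := (isClosed_eq (continuous_snd.fst.add ((continuous_apply s).comp continuous_snd.snd))
    ((continuous_bellman P c s).comp (continuous_fst.prodMk continuous_snd.snd))).mem_of_tendsto
    ((hαlim.comp hφ.tendsto_atTop).prodMk_nhds hlim)
    (Eventually.of_forall fun n => hP.one_sub_mul_add_sub_eq_bellman (hV (φ n)) s₀ s)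
  simpa [bellman] using hsol

end IsStochastic

end FiniteMDP

section Moves

variable {Emax Dmax : ℕ}

-- The channel succeeds (`h = true`): a failure has probability `1 - ps`, which may vanish.
def Move (Emax Dmax : ℕ) (s s' : State Emax Dmax) : Prop :=
  ∃ a b f, nextState Emax Dmax s a b f true = s'

lemma move_charge {e : ℕ} (he : e < Emax) (X : Bool) (d : Fin (Dmax + 1)) :
    Move Emax Dmax (⟨e, by omega⟩, X, d) (⟨e + 1, by omega⟩, X, d) :=
  ⟨false, true, false, by ext <;> simp [nextState, Fin.is_le, Nat.succ_le_of_lt he]⟩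

lemma move_flip (e : Fin (Emax + 1)) (X : Bool) {d : ℕ} (hd : d < Dmax) :
    Move Emax Dmax (e, X, ⟨d, by omega⟩) (e, !X, ⟨d + 1, by omega⟩) :=
  ⟨false, false, true, by ext <;> simp [nextState, Fin.is_le, Nat.succ_le_of_lt hd]⟩

lemma exists_move_toggle (e : Fin (Emax + 1)) (X : Bool) (d : Fin (Dmax + 1)) :
    ∃ d', Move Emax Dmax (e, X, d) (e, !X, d') := by
  refine ⟨_, false, false, true, Prod.ext ?_ (Prod.ext ?_ rfl)⟩ <;> simp [nextState, Fin.is_le]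

-- Transmitting while a unit of energy arrives resets the VIA and leaves the battery unchanged.
lemma move_reset {e : Fin (Emax + 1)} (he : 0 < e.val) (X : Bool) (d : Fin (Dmax + 1)) :
    Move Emax Dmax (e, X, d) (e, X, 0) :=
  ⟨true, true, false, by ext <;> simp [nextState, Fin.is_le, he]⟩

lemma move_drain {e : ℕ} (he : e < Emax) (X : Bool) (d : Fin (Dmax + 1)) :
    Move Emax Dmax (⟨e + 1, by omega⟩, X, d) (⟨e, by omega⟩, X, 0) :=
  ⟨true, false, false, by ext <;> simp [nextState, he.le]⟩

lemma reflTransGen_charge {e e' : ℕ} (hee : e ≤ e') (he' : e' ≤ Emax) (X : Bool)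
    (d : Fin (Dmax + 1)) :
    ReflTransGen (Move Emax Dmax) (⟨e, by omega⟩, X, d) (⟨e', by omega⟩, X, d) := by
  induction e', hee using Nat.le_induction with
  | base => rfl
  | succ e' _ ih => exact (ih (by omega)).tail (move_charge (by omega) X d)

lemma reflTransGen_drain {e e' : ℕ} (hee : e ≤ e') (he' : e' ≤ Emax) (X : Bool) :
    ReflTransGen (Move Emax Dmax) (⟨e', by omega⟩, X, 0) (⟨e, by omega⟩, X, 0) := by
  induction e', hee using Nat.le_induction with
  | base => rfl
  | succ e' _ ih => exact ReflTransGen.head (move_drain (by omega) X 0) (ih (by omega))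

lemma reflTransGen_reset {e : Fin (Emax + 1)} (he : 0 < e.val) (X Y : Bool)
    (d : Fin (Dmax + 1)) : ReflTransGen (Move Emax Dmax) (e, X, d) (e, Y, 0) := by
  rcases Bool.eq_or_eq_not Y X with rfl | rfl
  · exact .single (move_reset he Y d)
  · obtain ⟨d', hd'⟩ := exists_move_toggle e X d
    exact .head hd' (.single (move_reset he _ d'))

lemma exists_reflTransGen_flips (e : Fin (Emax + 1)) (X : Bool) {d : ℕ} (hd : d ≤ Dmax) :
    ∃ Y, ReflTransGen (Move Emax Dmax) (e, Y, 0) (e, X, ⟨d, by omega⟩) := by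
  induction d generalizing X with
  | zero => exact ⟨X, .refl⟩
  | succ d ih =>
    obtain ⟨Y, hY⟩ := ih (!X) (by omega)
    exact ⟨Y, hY.tail (by simpa using move_flip e (!X) (d := d) (by omega))⟩

lemma move_communicating (hE : 1 ≤ Emax) (s s' : State Emax Dmax) :
    ReflTransGen (Move Emax Dmax) s s' := by
  obtain ⟨e, X, d⟩ := s
  obtain ⟨e', X', d'⟩ := s'
  obtain ⟨Y, hY⟩ := exists_reflTransGen_flips e' X' d'.is_le
  exact (reflTransGen_charge (e := e) e.is_le le_rfl X d).trans <|
    (reflTransGen_reset (e := Fin.last Emax) hE X Y d).trans <|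
      (reflTransGen_drain e'.is_le le_rfl Y).trans hY

end Moves

section Kernel

variable {Emax Dmax : ℕ} {p q β ps : ℝ}

lemma bern_nonneg {x : ℝ} (h0 : 0 ≤ x) (h1 : x ≤ 1) (b : Bool) : 0 ≤ bern x b := by
  cases b <;> simp only [bern, if_true, Bool.false_eq_true, if_false] <;> linarith

lemma bern_pos {x : ℝ} (h0 : 0 < x) (h1 : x < 1) (b : Bool) : 0 < bern x b := by
  cases b <;> simp only [bern, if_true, Bool.false_eq_true, if_false] <;> linarith

lemma K_summand_nonneg (hp0 : 0 ≤ p) (hp1 : p ≤ 1) (hq0 : 0 ≤ q) (hq1 : q ≤ 1)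
    (hβ0 : 0 ≤ β) (hβ1 : β ≤ 1) (hps0 : 0 ≤ ps) (hps1 : ps ≤ 1)
    (a : Bool) (s s' : State Emax Dmax) (b f h : Bool) :
    0 ≤ bern β b * bern (if s.2.1 then q else p) f * bern ps h *
      (if nextState Emax Dmax s a b f h = s' then 1 else 0) := by
  have := bern_nonneg hβ0 hβ1 b
  have := bern_nonneg hps0 hps1 h
  have := bern_nonneg (x := if s.2.1 then q else p) (by split <;> assumption)
    (by split <;> assumption) f
  positivity

lemma K_isStochastic (hp0 : 0 ≤ p) (hp1 : p ≤ 1) (hq0 : 0 ≤ q) (hq1 : q ≤ 1)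
    (hβ0 : 0 ≤ β) (hβ1 : β ≤ 1) (hps0 : 0 ≤ ps) (hps1 : ps ≤ 1) :
    IsStochastic (K Emax Dmax p q β ps) where
  nonneg a s s' := sum_nonneg fun b _ => sum_nonneg fun f _ => sum_nonneg fun h _ =>
    K_summand_nonneg hp0 hp1 hq0 hq1 hβ0 hβ1 hps0 hps1 a s s' b f h
  sum_eq_one a s := by
    unfold K
    rw [sum_comm]
    simp_rw [sum_comm (s := (univ : Finset (State Emax Dmax)))]
    simp only [← mul_sum, sum_ite_eq, mem_univ, if_true, mul_one, Fintype.sum_bool, bern,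
      Bool.false_eq_true, if_false]
    ring

lemma posStep_of_move (hp0 : 0 < p) (hp1 : p < 1) (hq0 : 0 < q) (hq1 : q < 1)
    (hβ0 : 0 < β) (hβ1 : β < 1) (hps0 : 0 < ps) (hps1 : ps ≤ 1) {s s' : State Emax Dmax}
    (hmove : Move Emax Dmax s s') : PosStep (K Emax Dmax p q β ps) s s' := by
  obtain ⟨a, b, f, hnext⟩ := hmove
  have hnonneg := K_summand_nonneg hp0.le hp1.le hq0.le hq1.le hβ0.le hβ1.le hps0.le hps1 a s s'
  refine ⟨a, sum_pos' (fun b _ => sum_nonneg fun f _ => sum_nonneg fun h _ => hnonneg b f h)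
    ⟨b, mem_univ _, sum_pos' (fun f _ => sum_nonneg fun h _ => hnonneg b f h)
      ⟨f, mem_univ _, sum_pos' (fun h _ => hnonneg b f h) ⟨true, mem_univ _, ?_⟩⟩⟩⟩
  have := bern_pos hβ0 hβ1 b
  have := bern_pos (x := if s.2.1 then q else p) (by split <;> assumption)
    (by split <;> assumption) f
  simp only [hnext, bern, if_true, mul_one]
  positivity

end Kernel

theorem bellman_solution_exists_general (Emax Dmax : ℕ) (hE : 1 ≤ Emax)
    (p q β ps : ℝ) (hp0 : 0 < p) (hp1 : p < 1) (hq0 : 0 < q) (hq1 : q < 1)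
    (hβ0 : 0 < β) (hβ1 : β < 1) (hps0 : 0 < ps) (hps1 : ps ≤ 1) :
    ∃ (θ : ℝ) (V : State Emax Dmax → ℝ), ∀ s : State Emax Dmax,
      θ + V s = cost Emax Dmax s +
        min (KV Emax Dmax p q β ps false V s) (KV Emax Dmax p q β ps true V s) := by
  have hK := K_isStochastic (Emax := Emax) (Dmax := Dmax) hp0.le hp1.le hq0.le hq1.le hβ0.le
    hβ1.le hps0.le hps1
  have hcomm (s s' : State Emax Dmax) : ReflTransGen (PosStep (K Emax Dmax p q β ps)) s s' :=
    ReflTransGen.mono (fun _ _ => posStep_of_move hp0 hp1 hq0 hq1 hβ0 hβ1 hps0 hps1) s s'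
      (move_communicating hE s s')
  exact hK.exists_averageCost_solution (cost Emax Dmax) hcomm

/-- **Proposition 2 (existence).**  There exist `θ ∈ ℝ` and `V : 𝔖 → ℝ`
solving the average-cost Bellman equation
`θ + V(S) = c(S) + min{(K_0 V)(S), (K_1 V)(S)}` for all states `S`. -/
theorem bellman_solution_exists (Emax Dmax : ℕ) (hE : 1 ≤ Emax) (hD : 1 ≤ Dmax)
    (p q β ps : ℝ) (hp0 : 0 < p) (hp1 : p < 1) (hq0 : 0 < q) (hq1 : q < 1)
    (hβ0 : 0 < β) (hβ1 : β < 1) (hps0 : 0 < ps) (hps1 : ps ≤ 1) :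
    ∃ (θ : ℝ) (V : State Emax Dmax → ℝ), ∀ s : State Emax Dmax,
      θ + V s = cost Emax Dmax s +
        min (KV Emax Dmax p q β ps false V s) (KV Emax Dmax p q β ps true V s) :=
  bellman_solution_exists_general Emax Dmax hE p q β ps hp0 hp1 hq0 hq1 hβ0 hβ1 hps0 hps1

end VIA
end

section
/- Let E_max ≥ 1, let (b_t)_{t≥0} be i.i.d. Bernoulli(β) random variables, let e_0 ∈ {0,1}, and consider the greedy policy α_t = 1{e_t ≥ 1} with battery evolution e_{t+1} = min(e_t + b_t − α_t, E_max). Then almost surely lim_{T→∞} (1/T) ∑_{t=0}^{T−1} α_t = β; that is, the time-averaged energy consumption of the greedy policy equals β. -/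
/-!
Under the greedy policy a battery holding at most one unit is emptied at every slot, so the
level at slot `t + 1` is just the arrival `b t`, and the policy transmits at slot `t + 1` exactly
when a unit arrived at slot `t`. The consumption is therefore the arrival process shifted by one
slot, and its time average converges to `β` by the strong law of large numbers.
-/

open Finset MeasureTheory ProbabilityTheory Filter Topology

lemma Filter.Tendsto.cesaro_of_succ_eq {u v : ℕ → ℝ} {l : ℝ} (huv : ∀ t, u (t + 1) = v t)
    (hv : Tendsto (fun T : ℕ => (∑ t ∈ range T, v t) / T) atTop (𝓝 l)) :
    Tendsto (fun T : ℕ => (∑ t ∈ range T, u t) / T) atTop (𝓝 l) := by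
  rw [← tendsto_add_atTop_iff_nat 1]
  have hsplit : ∀ T : ℕ, (∑ t ∈ range (T + 1), u t) / ((T + 1 : ℕ) : ℝ)
      = u 0 / ((T : ℝ) + 1) + (T : ℝ) / (T + 1) * ((∑ t ∈ range T, v t) / T) := by
    intro T
    rw [sum_range_succ', add_comm, add_div]
    simp only [huv, Nat.cast_succ]
    rcases eq_or_ne T 0 with rfl | hT
    · simp
    · field_simp
  simp_rw [hsplit]
  simpa using ((tendsto_const_div_atTop_nhds_zero_nat (u 0)).comp (tendsto_add_atTop_nat 1)).add
    ((tendsto_natCast_div_add_atTop (1 : ℝ)).mul hv)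

lemma natCast_eq_indicator_of_le_one {Ω : Type*} {b : Ω → ℕ} (hb : ∀ ω, b ω ≤ 1) :
    (fun ω => (b ω : ℝ)) = {ω | b ω = 1}.indicator 1 := by
  ext ω
  rcases Nat.le_one_iff_eq_zero_or_eq_one.mp (hb ω) with h | h <;> simp [h]

section Bernoulli

variable {Ω : Type*} [MeasurableSpace Ω] {P : Measure Ω} {b c : Ω → ℕ}

lemma integral_natCast_of_le_one (hbm : Measurable b) (hb : ∀ ω, b ω ≤ 1) :
    ∫ ω, (b ω : ℝ) ∂P = P.real {ω | b ω = 1} := by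
  have hb1 : MeasurableSet {ω | b ω = 1} := hbm (measurableSet_singleton 1)
  rw [natCast_eq_indicator_of_le_one hb, integral_indicator_one hb1]

lemma integrable_natCast_of_le_one [IsFiniteMeasure P] (hbm : Measurable b)
    (hb : ∀ ω, b ω ≤ 1) : Integrable (fun ω => (b ω : ℝ)) P := by
  rw [natCast_eq_indicator_of_le_one hb]
  exact (integrable_const 1).indicator (hbm (measurableSet_singleton 1))

lemma identDistrib_of_le_one [IsFiniteMeasure P] (hbm : Measurable b) (hcm : Measurable c)
    (hb : ∀ ω, b ω ≤ 1) (hc : ∀ ω, c ω ≤ 1)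
    (hbc : P {ω | b ω = 1} = P {ω | c ω = 1}) : IdentDistrib b c P P := by
  refine ⟨hbm.aemeasurable, hcm.aemeasurable, Measure.ext_of_singleton fun n => ?_⟩
  rw [Measure.map_apply hbm (measurableSet_singleton n),
    Measure.map_apply hcm (measurableSet_singleton n)]
  change P {ω | b ω = n} = P {ω | c ω = n}
  rcases n with _ | _ | n
  · have hzero : ∀ d : Ω → ℕ, (∀ ω, d ω ≤ 1) → {ω | d ω = 0} = {ω | d ω = 1}ᶜ := by
      intro d hd
      ext ω
      have := hd ω
      simp only [Set.mem_ofPred_eq, Set.mem_compl_iff]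
      omega
    have hb1 : MeasurableSet {ω | b ω = 1} := hbm (measurableSet_singleton 1)
    have hc1 : MeasurableSet {ω | c ω = 1} := hcm (measurableSet_singleton 1)
    rw [hzero b hb, hzero c hc, measure_compl hb1 (measure_ne_top P _),
      measure_compl hc1 (measure_ne_top P _), hbc]
  · exact hbc
  · have hempty : ∀ d : Ω → ℕ, (∀ ω, d ω ≤ 1) → {ω | d ω = n + 2} = ∅ := by
      intro d hd
      ext ω
      have := hd ω
      simp only [Set.mem_ofPred_eq, Set.mem_empty_iff_false, iff_false]
      omega
    rw [hempty b hb, hempty c hc]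

theorem ae_tendsto_average_of_iIndepFun_bernoulli [IsFiniteMeasure P] {β : ℝ} (hβ : 0 ≤ β)
    {b : ℕ → Ω → ℕ} (hbm : ∀ t, Measurable (b t)) (hb : ∀ t ω, b t ω ≤ 1)
    (hbβ : ∀ t, P {ω | b t ω = 1} = ENNReal.ofReal β) (hindep : iIndepFun b P) :
    ∀ᵐ ω ∂P, Tendsto (fun T : ℕ => (∑ t ∈ range T, (b t ω : ℝ)) / T) atTop (𝓝 β) := by
  have hmean : ∫ ω, (b 0 ω : ℝ) ∂P = β := by
    rw [integral_natCast_of_le_one (hbm 0) (hb 0), measureReal_def, hbβ 0,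
      ENNReal.toReal_ofReal hβ]
  have hlaw := strong_law_ae_real (fun t ω => (b t ω : ℝ))
    (integrable_natCast_of_le_one (hbm 0) (hb 0))
    (fun i j hij => (hindep.indepFun hij).comp measurable_from_top measurable_from_top)
    (fun t => (identDistrib_of_le_one (hbm t) (hbm 0) (hb t) (hb 0)
      ((hbβ t).trans (hbβ 0).symm)).comp measurable_from_top)
  rwa [hmean] at hlaw

end Bernoulli

section Greedy

variable {Emax : ℕ} {b e α : ℕ → ℕ}

lemma greedy_battery_succ_eq_arrival (hE : 1 ≤ Emax) (hb : ∀ t, b t ≤ 1) (he0 : e 0 ≤ 1)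
    (hgreedy : ∀ t, α t = if 1 ≤ e t then 1 else 0)
    (hrec : ∀ t, e (t + 1) = min (e t + b t - α t) Emax) (t : ℕ) : e (t + 1) = b t := by
  have hstep : ∀ t, e t ≤ 1 → e (t + 1) = b t := by
    intro t ht
    have := hb t
    rw [hrec, hgreedy]
    split <;> omega
  induction t with
  | zero => exact hstep 0 he0
  | succ t ih => exact hstep (t + 1) (ih ▸ hb t)

lemma greedy_transmit_succ_eq_arrival (hE : 1 ≤ Emax) (hb : ∀ t, b t ≤ 1) (he0 : e 0 ≤ 1)
    (hgreedy : ∀ t, α t = if 1 ≤ e t then 1 else 0)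
    (hrec : ∀ t, e (t + 1) = min (e t + b t - α t) Emax) (t : ℕ) : α (t + 1) = b t := by
  have := hb t
  rw [hgreedy, greedy_battery_succ_eq_arrival hE hb he0 hgreedy hrec]
  split <;> omega

end Greedy

theorem greedy_avg_energy_consumption_eq_beta_general
    {Ω : Type*} [MeasurableSpace Ω] (P : Measure Ω) [IsProbabilityMeasure P]
    (Emax : ℕ) (hE : 1 ≤ Emax) (β : ℝ) (hβ0 : 0 ≤ β)
    (b : ℕ → Ω → ℕ)
    (hbmeas : ∀ t, Measurable (b t))
    (hb01 : ∀ t ω, b t ω ≤ 1)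
    (hbBern : ∀ t, P {ω | b t ω = 1} = ENNReal.ofReal β)
    (hbindep : iIndepFun b P)
    (e0 : ℕ) (he0 : e0 ≤ 1)
    (e α : ℕ → Ω → ℕ)
    (hgreedy : ∀ t ω, α t ω = if 1 ≤ e t ω then 1 else 0)
    (he0' : ∀ ω, e 0 ω = e0)
    (hrec : ∀ t ω, e (t + 1) ω = min (e t ω + b t ω - α t ω) Emax) :
    ∀ᵐ ω ∂P,
      Filter.Tendsto
        (fun T : ℕ => (∑ t ∈ Finset.range T, (α t ω : ℝ)) / T)
        Filter.atTop (nhds β) := by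
  filter_upwards [ae_tendsto_average_of_iIndepFun_bernoulli hβ0 hbmeas hb01 hbBern hbindep]
    with ω hω
  refine hω.cesaro_of_succ_eq fun t => ?_
  exact_mod_cast greedy_transmit_succ_eq_arrival (e := (e · ω)) hE (hb01 · ω)
    ((he0' ω).trans_le he0) (hgreedy · ω) (hrec · ω) t

/-- **Time-averaged energy consumption of the greedy policy equals β.**
If `b_t` are i.i.d. Bernoulli(β) energy arrivals, `e_0 ∈ {0,1}`, and the
greedy policy `α_t = 1{e_t ≥ 1}` is used with battery evolution
`e_{t+1} = min(e_t + b_t − α_t, E_max)`, then almost surely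
`lim_{T→∞} (1/T) ∑_{t<T} α_t = β`. -/
theorem greedy_avg_energy_consumption_eq_beta
    {Ω : Type*} [MeasurableSpace Ω] (P : Measure Ω) [IsProbabilityMeasure P]
    (Emax : ℕ) (hE : 1 ≤ Emax) (β : ℝ) (hβ0 : 0 ≤ β) (hβ1 : β ≤ 1)
    (b : ℕ → Ω → ℕ)
    (hbmeas : ∀ t, Measurable (b t))
    (hb01 : ∀ t ω, b t ω ≤ 1)
    (hbBern : ∀ t, P {ω | b t ω = 1} = ENNReal.ofReal β)
    (hbindep : iIndepFun b P)
    (e0 : ℕ) (he0 : e0 ≤ 1)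
    (e α : ℕ → Ω → ℕ)
    (hgreedy : ∀ t ω, α t ω = if 1 ≤ e t ω then 1 else 0)
    (he0' : ∀ ω, e 0 ω = e0)
    (hrec : ∀ t ω, e (t + 1) ω = min (e t ω + b t ω - α t ω) Emax) :
    ∀ᵐ ω ∂P,
      Filter.Tendsto
        (fun T : ℕ => (∑ t ∈ Finset.range T, (α t ω : ℝ)) / T)
        Filter.atTop (nhds β) :=
  greedy_avg_energy_consumption_eq_beta_general P Emax hE β hβ0 b hbmeas hb01 hbBern hbindep e0 he0
    e α hgreedy he0' hrec
end
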